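/- arXiv:math/0103125 — 7 statements merged into one kernel-verified Lean document; each statement's English description precedes it below -/
import Mathlib

section
/- For integers $j \geq 0$ written $p$-adically as $j = \sum_{l\geq 0} a_l p^l$ with $a_l \in [0,p-1]$, one has $\sum_{i=1}^{j} p^{v_p(i)} = \sum_{k\geq 0} (a_k - a_{k+1})(k+1)p^k$, where $p^{v_p(i)}$ denotes the $p$-part of $i$. -/
/-!
Grouping `i ≤ j` by `k = v_p(i)`, exactly `⌊j/p^k⌋ - ⌊j/p^(k+1)⌋` of them have valuation `k`,
so the left side is `∑ₖ (⌊j/p^k⌋ - ⌊j/p^(k+1)⌋) p^k`. Since the digits are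
`a_k = ⌊j/p^k⌋ - p⌊j/p^(k+1)⌋`, the right side turns into the same sum by an Abel summation.
-/

open Finset

theorem Nat.card_filter_padicValNat_eq_add_div {p : ℕ} (hp : p ≠ 1) (j k : ℕ) :
    #{i ∈ Ioc 0 j | padicValNat p i = k} + j / p ^ (k + 1) = j / p ^ k := by
  have hval : ∀ i ∈ Ioc 0 j, padicValNat p i = k ↔ p ^ k ∣ i ∧ ¬p ^ (k + 1) ∣ i := by
    intro i hi
    have hi0 : i ≠ 0 := (mem_Ioc.1 hi).1.ne'
    rw [padicValNat_dvd_iff_le_of_ne_one hp hi0, padicValNat_dvd_iff_le_of_ne_one hp hi0]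
    omega
  have hsucc : ∀ i, p ^ (k + 1) ∣ i → p ^ k ∣ i := fun i => (pow_dvd_pow p k.le_succ).trans
  rw [← Nat.Ioc_filter_dvd_card_eq_div, ← Nat.Ioc_filter_dvd_card_eq_div,
    ← card_filter_add_card_filter_not (s := {i ∈ Ioc 0 j | p ^ k ∣ i}) (p ^ (k + 1) ∣ ·),
    filter_filter, filter_filter, filter_congr hval, add_comm]
  congr 2
  exact filter_congr fun i _ => ⟨fun h => ⟨hsucc i h, h⟩, fun h => h.2⟩

theorem sum_Ioc_pow_padicValNat {R : Type*} [CommRing R] {p : ℕ} (hp : p ≠ 1) (j : ℕ) :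
    ∑ i ∈ Ioc 0 j, (p : R) ^ padicValNat p i =
      ∑ k ∈ range (j + 1), (((j / p ^ k : ℕ) : R) - ((j / p ^ (k + 1) : ℕ) : R)) * (p : R) ^ k := by
  have hmaps : ∀ i ∈ Ioc 0 j, padicValNat p i ∈ range (j + 1) := fun i hi =>
    mem_range_succ_iff.2 ((Nat.padicValNat_le_self i).trans (mem_Ioc.1 hi).2)
  rw [← sum_fiberwise_of_maps_to hmaps]
  refine sum_congr rfl fun k _ => ?_
  rw [sum_congr rfl fun i hi => by rw [(mem_filter.1 hi).2], sum_const, nsmul_eq_mul,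
    ← Nat.card_filter_padicValNat_eq_add_div hp j k]
  push_cast
  ring

theorem sum_sub_mul_mul_succ_mul_pow {R : Type*} [CommRing R] (D : ℕ → R) (c : R) (n : ℕ) :
    ∑ k ∈ range n, (D k - c * D (k + 1)) * (k + 1) * c ^ k =
      ∑ k ∈ range n, D k * c ^ k - n * c ^ n * D n := by
  induction n with
  | zero => simp
  | succ n ih =>
    rw [sum_range_succ, ih, sum_range_succ]
    push_cast
    ring

theorem Nat.cast_div_pow_mod_eq_sub {R : Type*} [Ring R] {p j k : ℕ} :
    ((j / p ^ k % p : ℕ) : R) = ((j / p ^ k : ℕ) : R) - p * ((j / p ^ (k + 1) : ℕ) : R) := by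
  rw [pow_succ, ← Nat.div_div_eq_div_mul, eq_sub_iff_add_eq]
  exact_mod_cast congrArg (Nat.cast : ℕ → R) (Nat.mod_add_div _ _)

/-- For `j ≥ 0` written `p`-adically as `j = ∑ a_l p^l` with digits `a_l = j / p^l % p`,
one has `∑_{i=1}^{j} p^(v_p i) = ∑_{k ≥ 0} (a_k - a_{k+1})(k+1) p^k`. -/
theorem stmt_0 (p : ℕ) (hp : p.Prime) (j : ℕ) :
    (∑ i ∈ Finset.Icc 1 j, ((p : ℤ) ^ (padicValNat p i))) =
      ∑ k ∈ Finset.range (j + 1),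
        (((j / p ^ k % p : ℕ) : ℤ) - ((j / p ^ (k + 1) % p : ℕ) : ℤ)) * (k + 1) * (p : ℤ) ^ k := by
  set D : ℕ → ℤ := fun k => ((j / p ^ k : ℕ) : ℤ) - ((j / p ^ (k + 1) : ℕ) : ℤ) with hD
  have hdigits : ∀ k, ((j / p ^ k % p : ℕ) : ℤ) - ((j / p ^ (k + 1) % p : ℕ) : ℤ) =
      D k - p * D (k + 1) := fun k => by
    rw [Nat.cast_div_pow_mod_eq_sub, Nat.cast_div_pow_mod_eq_sub]
    ring
  have hvanish : ∀ m, j < m → j / p ^ m = 0 := fun m hm =>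
    Nat.div_eq_of_lt (hm.trans (Nat.lt_pow_self hp.one_lt))
  have hDj : D (j + 1) = 0 := by
    simp only [hD, hvanish (j + 1) j.lt_succ_self, hvanish (j + 1 + 1) (by omega), sub_zero,
      Nat.cast_zero]
  rw [show Icc 1 j = Ioc 0 j from Icc_add_one_left_eq_Ioc 0 j]
  simp_rw [hdigits, sum_sub_mul_mul_succ_mul_pow, hDj, mul_zero, sub_zero,
    sum_Ioc_pow_padicValNat hp.ne_one]
  rfl
end

section
/- For integers $i, k$ and $0 \leq a \leq b < c \leq m$, one has $\sum_{j \in \mathbb{Z}} (-1)^j E_{i-j,[a,c[}\, P_{j-k,[a,b]} = (-1)^k E_{i-k,[b+1,c[}$, where $E$ and $P$ denote elementary and complete homogeneous symmetric polynomials in the indeterminates $x_a, \dots$. -/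
open MvPolynomial in
/-- Elementary symmetric polynomial `E_{d,s}`, zero for `d < 0`. -/
noncomputable def Esym (d : ℤ) (s : Finset ℕ) : MvPolynomial ℕ ℤ :=
  if 0 ≤ d then ∑ t ∈ s.powersetCard d.toNat, ∏ i ∈ t, X i else 0

open MvPolynomial in
/-- Complete homogeneous symmetric polynomial `P_{d,s}`, zero for `d < 0`. -/
noncomputable def Hsym (d : ℤ) (s : Finset ℕ) : MvPolynomial ℕ ℤ :=
  if 0 ≤ d then ∑ m ∈ s.sym d.toNat, ((m : Multiset ℕ).map X).prod else 0

/-!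
In terms of generating functions, `∑_d E_{d,S} t^d = ∏_{x ∈ S} (1 + x t)` and
`∑_j (-1)^j P_{j,T} t^j = ∏_{x ∈ T} (1 + x t)⁻¹`, so for `S = T ⊔ U` the sum is the
coefficient of `t^(i-k)` in `E_S(t) / E_T(t) = E_U(t)`, with `T = [a,b]` and `U = [b+1,c[`.
Formally we induct on `T`: adjoining `x` to `T` multiplies `E_S` by `1 + x t`, and the
recursion `P_{d,T∪{x}} = P_{d,T} + x P_{d-1,T∪{x}}` cancels exactly this factor.
-/

open MvPolynomial Finset Function

lemma Finset.sym_succ_insert {α : Type*} [DecidableEq α] {x : α} {s : Finset α} (hx : x ∉ s)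
    (n : ℕ) :
    (insert x s).sym (n + 1) = s.sym (n + 1) ∪ ((insert x s).sym n).image (Sym.cons x) := by
  ext m
  simp only [mem_sym_iff, mem_union, mem_image]
  constructor
  · intro hm
    by_cases hxm : x ∈ m
    · refine Or.inr ⟨m.erase x hxm, fun a ha => hm a ?_, Sym.cons_erase hxm⟩
      rw [← Sym.mem_coe, Sym.coe_erase] at ha
      exact Multiset.mem_of_mem_erase ha
    · exact Or.inl fun a ha => (mem_insert.1 (hm a ha)).resolve_left (by rintro rfl; exact hxm ha)
  · rintro (hm | ⟨m', hm', rfl⟩) a ha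
    · exact mem_insert_of_mem (hm a ha)
    · rcases Sym.mem_cons.1 ha with rfl | h
      exacts [mem_insert_self _ _, hm' a h]

lemma Esym_of_neg {d : ℤ} (hd : d < 0) (s : Finset ℕ) : Esym d s = 0 := by
  simp [Esym, hd.not_ge]

lemma Hsym_of_neg {d : ℤ} (hd : d < 0) (s : Finset ℕ) : Hsym d s = 0 := by
  simp [Hsym, hd.not_ge]

lemma Esym_natCast (n : ℕ) (s : Finset ℕ) : Esym n s = (s.val.map X).esymm n := by
  simp [Esym, Finset.esymm_map_val]

lemma Hsym_natCast (n : ℕ) (s : Finset ℕ) :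
    Hsym n s = ∑ m ∈ s.sym n, ((m : Multiset ℕ).map X).prod := by
  simp [Hsym]

lemma Hsym_zero (s : Finset ℕ) : Hsym 0 s = 1 := by
  simp only [Hsym, le_refl, if_true, Int.toNat_zero, sym_zero, sum_singleton]
  rfl

lemma Hsym_empty {d : ℤ} (hd : d ≠ 0) : Hsym d ∅ = 0 := by
  rcases hd.lt_or_gt with hd | hd
  · exact Hsym_of_neg hd ∅
  · have hsym : (∅ : Finset ℕ).sym d.toNat = ∅ := sym_eq_empty.2 ⟨by omega, rfl⟩
    simp [Hsym, hd.le, hsym]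

lemma Multiset.esymm_cons {R : Type*} [CommSemiring R] (a : R) (s : Multiset R) (n : ℕ) :
    (a ::ₘ s).esymm (n + 1) = s.esymm (n + 1) + a * s.esymm n := by
  simp [Multiset.esymm, Multiset.powersetCard_cons, Multiset.sum_map_mul_left]

lemma Esym_insert {x : ℕ} {s : Finset ℕ} (hx : x ∉ s) (d : ℤ) :
    Esym d (insert x s) = Esym d s + X x * Esym (d - 1) s := by
  rcases lt_trichotomy d 0 with hd | rfl | hd
  · simp [Esym_of_neg hd, Esym_of_neg (show d - 1 < 0 by omega)]
  · simp [Esym]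
  · obtain ⟨n, rfl⟩ : ∃ n : ℕ, d = n + 1 := ⟨(d - 1).toNat, by omega⟩
    rw [add_sub_cancel_right, ← Nat.cast_succ, Esym_natCast, Esym_natCast, Esym_natCast,
      insert_val_of_notMem hx, Multiset.map_cons, Multiset.esymm_cons]

lemma Hsym_insert {x : ℕ} {s : Finset ℕ} (hx : x ∉ s) (d : ℤ) :
    Hsym d (insert x s) = Hsym d s + X x * Hsym (d - 1) (insert x s) := by
  rcases lt_trichotomy d 0 with hd | rfl | hd
  · simp [Hsym_of_neg hd, Hsym_of_neg (show d - 1 < 0 by omega)]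
  · simp [Hsym_zero, Hsym_of_neg (show (-1 : ℤ) < 0 by omega)]
  obtain ⟨n, rfl⟩ : ∃ n : ℕ, d = n + 1 := ⟨(d - 1).toNat, by omega⟩
  have hdisj : Disjoint (s.sym (n + 1)) (((insert x s).sym n).image (Sym.cons x)) := by
    refine disjoint_left.2 fun m hm hm' => ?_
    obtain ⟨m', -, rfl⟩ := mem_image.1 hm'
    exact hx (mem_sym_iff.1 hm x (Sym.mem_cons_self _ _))
  rw [add_sub_cancel_right, ← Nat.cast_succ, Hsym_natCast, Hsym_natCast, Hsym_natCast,
    sym_succ_insert hx, sum_union hdisj,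
    sum_image fun _ _ _ _ h => (Sym.cons_inj_right _ _ _).1 h, mul_sum]
  simp [Sym.coe_cons]

lemma hasFiniteSupport_Esym_sub_mul {g : ℤ → MvPolynomial ℕ ℤ} (hg : ∀ d < 0, g d = 0)
    (n : ℤ) (s : Finset ℕ) : HasFiniteSupport fun j => Esym (n - j) s * g j := by
  refine (Set.finite_Icc 0 n).subset fun j hj => ?_
  by_contra hj'
  rcases not_and_or.1 hj' with h | h
  · exact hj (mul_eq_zero_of_right _ (hg j (by omega)))
  · exact hj (mul_eq_zero_of_left (Esym_of_neg (by omega) s) _)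

theorem finsum_sign_mul_Esym_union_mul_Hsym {T U : Finset ℕ} (hTU : Disjoint T U) (n : ℤ) :
    ∑ᶠ j : ℤ, C (((-1 : ℤˣ) ^ j : ℤˣ) : ℤ) * (Esym (n - j) (T ∪ U) * Hsym j T)
      = Esym n U := by
  induction T using Finset.induction_on generalizing n with
  | empty =>
    rw [finsum_eq_single _ 0 fun j hj => by rw [Hsym_empty hj, mul_zero, mul_zero]]
    simp [Hsym_zero]
  | insert x T hxT ih =>
    set ε : ℤ → MvPolynomial ℕ ℤ := fun j => C (((-1 : ℤˣ) ^ j : ℤˣ) : ℤ) with hε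
    set S := T ∪ U
    have hxS : x ∉ S := by
      simpa [S, hxT] using fun hxU => disjoint_left.1 hTU (mem_insert_self x T) hxU
    have hε_succ : ∀ j, ε (j + 1) = -ε j := fun j => by simp [hε, zpow_add_one]
    have hfin : ∀ g : ℤ → MvPolynomial ℕ ℤ, (∀ d < 0, g d = 0) → ∀ n,
        HasFiniteSupport fun j => ε j * (Esym (n - j) S * g j) := fun g hg n =>
      (hasFiniteSupport_Esym_sub_mul hg n S).fun_mul_right ε
    have hH_neg : ∀ d < 0, Hsym d (insert x T) = 0 := fun d hd => Hsym_of_neg hd _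
    have hH_pred_neg : ∀ d < 0, Hsym (d - 1) (insert x T) = 0 :=
      fun d hd => Hsym_of_neg (by omega) _
    have hshift : ∑ᶠ j, ε j * (Esym (n - j) S * Hsym (j - 1) (insert x T))
        = -∑ᶠ j, ε j * (Esym (n - 1 - j) S * Hsym j (insert x T)) := by
      rw [← finsum_comp_equiv (Equiv.addRight 1), ← finsum_neg_distrib]
      refine finsum_congr fun j => ?_
      simp only [Equiv.coe_addRight, hε_succ, add_sub_cancel_right, sub_add_eq_sub_sub_swap]
      ring
    rw [insert_union, ← ih (disjoint_of_subset_left (subset_insert x T) hTU) n]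
    calc ∑ᶠ j, ε j * (Esym (n - j) (insert x S) * Hsym j (insert x T))
        = ∑ᶠ j, ε j * (Esym (n - j) S * Hsym j (insert x T))
          + X x * ∑ᶠ j, ε j * (Esym (n - 1 - j) S * Hsym j (insert x T)) := by
          rw [mul_finsum, ← finsum_add_distrib (hfin _ hH_neg n)
            ((hfin _ hH_neg (n - 1)).fun_mul_right fun _ => X x)]
          refine finsum_congr fun j => ?_
          rw [Esym_insert hxS, sub_right_comm]
          ring
      _ = ∑ᶠ j, ε j * (Esym (n - j) S * Hsym j (insert x T))
          - X x * ∑ᶠ j, ε j * (Esym (n - j) S * Hsym (j - 1) (insert x T)) := by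
          rw [hshift]
          ring
      _ = ∑ᶠ j, ε j * (Esym (n - j) S * Hsym j T) := by
          rw [mul_finsum, ← finsum_sub_distrib (hfin _ hH_neg n)
            ((hfin _ hH_pred_neg n).fun_mul_right fun _ => X x)]
          refine finsum_congr fun j => ?_
          rw [Hsym_insert hxT]
          ring

theorem stmt_4_general (a b c : ℕ) (i k : ℤ) (hab : a ≤ b) (hbc : b < c) :
    (∑ᶠ j : ℤ, MvPolynomial.C ((((-1 : ℤˣ) ^ j : ℤˣ) : ℤ))
        * (Esym (i - j) (Finset.Ico a c) * Hsym (j - k) (Finset.Icc a b)))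
      = MvPolynomial.C ((((-1 : ℤˣ) ^ k : ℤˣ) : ℤ)) * Esym (i - k) (Finset.Ico (b + 1) c) := by
  rw [← Ico_add_one_right_eq_Icc,
    ← Ico_union_Ico_eq_Ico (Nat.le_succ_of_le hab) (Nat.succ_le_of_lt hbc),
    ← finsum_sign_mul_Esym_union_mul_Hsym (Ico_disjoint_Ico_consecutive a (b + 1) c),
    mul_finsum, ← finsum_comp_equiv (Equiv.addLeft k)]
  refine finsum_congr fun j => ?_
  simp only [Equiv.coe_addLeft, zpow_add, Units.val_mul, map_mul, add_sub_cancel_left,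
    sub_add_eq_sub_sub]
  ring

/-- For `i, k ∈ ℤ` and `0 ≤ a ≤ b < c ≤ m`:
`∑_{j ∈ ℤ} (-1)^j E_{i-j,[a,c[} P_{j-k,[a,b]} = (-1)^k E_{i-k,[b+1,c[}`. -/
theorem stmt_4 (m a b c : ℕ) (i k : ℤ) (hab : a ≤ b) (hbc : b < c) (hcm : c ≤ m) :
    (∑ᶠ j : ℤ, MvPolynomial.C ((((-1 : ℤˣ) ^ j : ℤˣ) : ℤ))
        * (Esym (i - j) (Finset.Ico a c) * Hsym (j - k) (Finset.Icc a b)))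
      = MvPolynomial.C ((((-1 : ℤˣ) ^ k : ℤˣ) : ℤ)) * Esym (i - k) (Finset.Ico (b + 1) c) :=
  stmt_4_general a b c i k hab hbc
end

section
/- Let $m \geq 1$, let $V_x = (x_j^i)_{i,j \in [0,m-1]}$ be the Vandermonde matrix, $E_x$ the lower triangular matrix with $(i,j)$-entry $(-1)^{i-j}E_{i-j,[0,i[}$, $Y_x$ the diagonal matrix with $i$-th entry $y_i = \prod_{k < i}(x_i - x_k)$, and $M_x$ the matrix with $(i,j)$-entry $\prod_{k<i}(x_j - x_k) / \prod_{k<i}(x_i - x_k)$. Then $E_x V_x = Y_x M_x$ in the field of rational functions $\mathbb{Q}(x_0, \dots, x_{m-1})$. -/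
open MvPolynomial in
/-- Elementary symmetric polynomial `E_{d,s}` in variables indexed by `s`, zero for `d < 0`. -/
noncomputable def EsymF {σ : Type*} [DecidableEq σ] (d : ℤ) (s : Finset σ) :
    MvPolynomial σ ℚ :=
  if 0 ≤ d then ∑ t ∈ s.powersetCard d.toNat, ∏ i ∈ t, X i else 0

/-!
The `i`-th row of `E_x` lists the coefficients of `p_i = ∏_{k<i} (X - x_k)` (Vieta), so the
`(i, j)` entry of `E_x V_x` is `p_i(x_j) = ∏_{k<i} (x_j - x_k)`. Since the `x_k` are distinct
in `ℚ(x_0, …, x_{m-1})`, every `y_i` is nonzero and `Y_x M_x` has the same entries.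
-/

open Finset Polynomial

theorem Polynomial.sum_fin_coeff_mul_pow {R : Type*} [CommSemiring R] {p : R[X]} {m : ℕ}
    (hp : p.natDegree < m) (a : R) : ∑ l : Fin m, p.coeff l * a ^ (l : ℕ) = p.eval a := by
  rw [eval_eq_sum_range' hp, Fin.sum_univ_eq_sum_range (fun l => p.coeff l * a ^ l)]

theorem Matrix.diagonal_mul_of_div {n K : Type*} [Fintype n] [DecidableEq n] [Field K]
    {d : n → K} (hd : ∀ i, d i ≠ 0) (g : n → n → K) :
    diagonal d * of (fun i j => g i j / d i) = of g := by
  ext i j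
  simp [diagonal_mul, mul_div_cancel₀ _ (hd i)]

theorem map_EsymF_natCast {σ R : Type*} [DecidableEq σ] [CommSemiring R]
    (f : MvPolynomial σ ℚ →+* R) (n : ℕ) (s : Finset σ) :
    f (EsymF n s) = (s.val.map fun k => f (MvPolynomial.X k)).esymm n := by
  rw [EsymF, if_pos (Int.natCast_nonneg n), Int.toNat_natCast, esymm_map_val, map_sum]
  simp only [map_prod]

theorem EsymF_of_neg {σ : Type*} [DecidableEq σ] {d : ℤ} (hd : d < 0) (s : Finset σ) :
    EsymF d s = 0 :=
  if_neg hd.not_ge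

/-- Vieta's formula; for `n > #s` both sides vanish, the left one because `EsymF` is `0` at
negative degree. -/
theorem neg_one_zpow_mul_map_EsymF {σ K : Type*} [DecidableEq σ] [Field K]
    (f : MvPolynomial σ ℚ →+* K) (s : Finset σ) (n : ℕ) :
    (-1 : K) ^ ((#s : ℤ) - n) * f (EsymF ((#s : ℤ) - n) s) =
      (∏ k ∈ s, (X - C (f (MvPolynomial.X k)))).coeff n := by
  rcases le_or_gt n #s with hn | hn
  · have hprod : ∏ k ∈ s, (X - C (f (MvPolynomial.X k))) =
        ((s.val.map fun k => f (MvPolynomial.X k)).map fun t => X - C t).prod := by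
      rw [Multiset.map_map]; rfl
    rw [← Nat.cast_sub hn, zpow_natCast, map_EsymF_natCast, hprod,
      Multiset.prod_X_sub_C_coeff _ (by simpa using hn), Multiset.card_map, card_val]
  · rw [EsymF_of_neg (by omega), map_zero, mul_zero, coeff_eq_zero_of_natDegree_lt]
    rwa [natDegree_finsetProd_X_sub_C_eq_card]

theorem stmt_6_general (m : ℕ) :
    letI K := FractionRing (MvPolynomial (Fin m) ℚ)
    let x : Fin m → K := fun i => algebraMap (MvPolynomial (Fin m) ℚ) K (MvPolynomial.X i)
    (Matrix.of fun i j : Fin m =>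
        ((-1 : K) ^ ((i : ℤ) - (j : ℤ)))
          * algebraMap (MvPolynomial (Fin m) ℚ) K (EsymF ((i : ℤ) - (j : ℤ)) (Finset.Iio i)))
      * (Matrix.of fun i j : Fin m => (x j) ^ (i : ℕ))
      = Matrix.diagonal (fun i : Fin m => ∏ k ∈ Finset.Iio i, (x i - x k))
        * (Matrix.of fun i j : Fin m =>
            (∏ k ∈ Finset.Iio i, (x j - x k)) / (∏ k ∈ Finset.Iio i, (x i - x k))) := by
  intro x
  have hx : Function.Injective x :=
    (IsFractionRing.injective _ _).comp MvPolynomial.X_injective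
  have hy (i : Fin m) : ∏ k ∈ Iio i, (x i - x k) ≠ 0 :=
    prod_ne_zero_iff.mpr fun k hk => sub_ne_zero.mpr (hx.ne (mem_Iio.mp hk).ne')
  rw [Matrix.diagonal_mul_of_div hy]
  ext i j
  have hcoeff := neg_one_zpow_mul_map_EsymF
    (algebraMap (MvPolynomial (Fin m) ℚ) (FractionRing (MvPolynomial (Fin m) ℚ))) (Iio i)
  have hdeg : (∏ k ∈ Iio i, (X - C (x k))).natDegree < m := by
    rw [natDegree_finsetProd_X_sub_C_eq_card, Fin.card_Iio]
    exact i.isLt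
  simp only [Fin.card_Iio] at hcoeff
  simp only [Matrix.mul_apply, Matrix.of_apply, hcoeff]
  rw [sum_fin_coeff_mul_pow hdeg, eval_prod]
  simp

/-- `E_x V_x = Y_x M_x` over the rational function field `ℚ(x_0, …, x_{m-1})`, where
`(V_x)_{ij} = x_j^i`, `(E_x)_{ij} = (-1)^{i-j} E_{i-j,[0,i[}`, `Y_x` is diagonal with entries
`y_i = ∏_{k<i}(x_i - x_k)`, and `(M_x)_{ij} = ∏_{k<i}(x_j - x_k)/∏_{k<i}(x_i - x_k)`. -/
theorem stmt_6 (m : ℕ) (hm : 1 ≤ m) :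
    letI K := FractionRing (MvPolynomial (Fin m) ℚ)
    let x : Fin m → K := fun i => algebraMap (MvPolynomial (Fin m) ℚ) K (MvPolynomial.X i)
    (Matrix.of fun i j : Fin m =>
        ((-1 : K) ^ ((i : ℤ) - (j : ℤ)))
          * algebraMap (MvPolynomial (Fin m) ℚ) K (EsymF ((i : ℤ) - (j : ℤ)) (Finset.Iio i)))
      * (Matrix.of fun i j : Fin m => (x j) ^ (i : ℕ))
      = Matrix.diagonal (fun i : Fin m => ∏ k ∈ Finset.Iio i, (x i - x k))
        * (Matrix.of fun i j : Fin m =>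
            (∏ k ∈ Finset.Iio i, (x j - x k)) / (∏ k ∈ Finset.Iio i, (x i - x k))) :=
  stmt_6_general m
end

section
/- Let $m \geq 1$ and let $L_x$ be the strictly upper triangular $m \times m$ matrix with $(i,j)$-entry $\prod_{k \in [0,j[ \setminus \{i\}}(x_j - x_k) / \prod_{k \in [0,j[ \setminus \{i\}}(x_i - x_k)$ for $i < j$ and $0$ for $i \geq j$, and let $M_x$ have $(i,j)$-entry $\prod_{k<i}(x_j - x_k)/\prod_{k<i}(x_i - x_k)$. Then $M_x(I - L_x) = I$ over the field $\mathbb{Q}(x_0, \dots, x_{m-1})$. -/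
/-!
Row `i` of `M_x` lists the values at the nodes of the Newton polynomial `p_i = ∏_{k<i} (X - x_k)`,
normalized so that `p_i(x_i)` becomes `1`, while for `l < j` the entry `(L_x)_{lj}` is the value at
`x_j` of the `l`-th Lagrange basis polynomial on the nodes `x_0, …, x_{j-1}`. For `i < j` the
polynomial `p_i` has degree `i < j`, so it agrees with its Lagrange interpolant on these nodes; at
`x_j` this says `(M_x)_{ij} = (M_x L_x)_{ij}`. For `i ≥ j` the product `(M_x L_x)_{ij}` only involves
entries `(M_x)_{il}` with `l < i`, which vanish because `p_i(x_l) = 0`.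
-/

open Finset Polynomial Matrix

namespace Lagrange

variable {F ι : Type*} [Field F] [DecidableEq ι]

theorem eval_basis (s : Finset ι) (v : ι → F) (i : ι) (y : F) :
    eval y (Lagrange.basis s v i) =
      (∏ k ∈ s.erase i, (y - v k)) / ∏ k ∈ s.erase i, (v i - v k) := by
  rw [Lagrange.basis, eval_prod, ← prod_div_distrib]
  refine prod_congr rfl fun k _ => ?_
  simp [basisDivisor, div_eq_inv_mul]

theorem eval_eq_sum_mul_eval_basis {s : Finset ι} {v : ι → F} (hvs : Set.InjOn v s)
    {f : F[X]} (hf : f.degree < #s) (y : F) :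
    eval y f = ∑ i ∈ s, eval (v i) f * eval y (Lagrange.basis s v i) := by
  conv_lhs => rw [eq_interpolate hvs hf, interpolate_apply]
  simp only [eval_finsetSum, eval_mul, eval_C]

end Lagrange

section NewtonLagrange

variable {F : Type*} [Field F] {m : ℕ}

def newtonMatrix (x : Fin m → F) : Matrix (Fin m) (Fin m) F :=
  of fun i j => (∏ k ∈ Iio i, (x j - x k)) / ∏ k ∈ Iio i, (x i - x k)

def lagrangeMatrix (x : Fin m → F) : Matrix (Fin m) (Fin m) F :=
  of fun i j =>
    if i < j then (∏ k ∈ (Iio j).erase i, (x j - x k)) / ∏ k ∈ (Iio j).erase i, (x i - x k)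
    else 0

theorem newtonMatrix_apply (x : Fin m → F) (i j : Fin m) :
    newtonMatrix x i j =
      eval (x j) (Lagrange.nodal (Iio i) x) / eval (x i) (Lagrange.nodal (Iio i) x) := by
  simp only [newtonMatrix, of_apply, Lagrange.eval_nodal]

theorem newtonMatrix_apply_of_lt (x : Fin m → F) {i j : Fin m} (h : j < i) :
    newtonMatrix x i j = 0 := by
  rw [newtonMatrix_apply, Lagrange.eval_nodal_at_node (mem_Iio.2 h), zero_div]

theorem newtonMatrix_apply_self {x : Fin m → F} (hx : Function.Injective x) (i : Fin m) :
    newtonMatrix x i i = 1 := by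
  refine div_self (prod_ne_zero_iff.2 fun k hk => sub_ne_zero.2 (hx.ne ?_))
  exact (mem_Iio.1 hk).ne'

theorem newtonMatrix_apply_eq_sum {x : Fin m → F} (hx : Function.Injective x) {i j : Fin m}
    (h : i < j) :
    newtonMatrix x i j =
      ∑ l ∈ Iio j, newtonMatrix x i l * eval (x j) (Lagrange.basis (Iio j) x l) := by
  have hdeg : (Lagrange.nodal (Iio i) x).degree < #(Iio j) := by
    rw [Lagrange.degree_nodal, Fin.card_Iio, Fin.card_Iio]
    exact_mod_cast h
  simp only [newtonMatrix_apply, div_mul_eq_mul_div, ← sum_div]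
  rw [Lagrange.eval_eq_sum_mul_eval_basis hx.injOn hdeg]

theorem mul_lagrangeMatrix_apply (A : Matrix (Fin m) (Fin m) F) (x : Fin m → F) (i j : Fin m) :
    (A * lagrangeMatrix x) i j = ∑ l ∈ Iio j, A i l * eval (x j) (Lagrange.basis (Iio j) x l) := by
  simp only [mul_apply, lagrangeMatrix, of_apply, mul_ite, mul_zero, Lagrange.eval_basis]
  rw [← sum_filter, filter_gt_eq_Iio]

theorem newtonMatrix_mul_one_sub_lagrangeMatrix {x : Fin m → F} (hx : Function.Injective x) :
    newtonMatrix x * (1 - lagrangeMatrix x) = 1 := by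
  ext i j
  rw [Matrix.mul_sub, Matrix.mul_one, Matrix.sub_apply, mul_lagrangeMatrix_apply]
  rcases lt_or_ge i j with h | h
  · rw [← newtonMatrix_apply_eq_sum hx h, sub_self, one_apply_ne h.ne]
  · have hsum : ∑ l ∈ Iio j, newtonMatrix x i l * eval (x j) (Lagrange.basis (Iio j) x l) = 0 :=
      sum_eq_zero fun l hl => by
        rw [newtonMatrix_apply_of_lt x ((mem_Iio.1 hl).trans_le h), zero_mul]
    rw [hsum, sub_zero]
    rcases h.eq_or_lt with rfl | h
    · rw [newtonMatrix_apply_self hx, one_apply_eq]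
    · rw [newtonMatrix_apply_of_lt x h, one_apply_ne h.ne']

end NewtonLagrange

theorem stmt_7_general (m : ℕ) :
    letI K := FractionRing (MvPolynomial (Fin m) ℚ)
    let x : Fin m → K := fun i => algebraMap (MvPolynomial (Fin m) ℚ) K (MvPolynomial.X i)
    (Matrix.of fun i j : Fin m =>
        (∏ k ∈ Finset.Iio i, (x j - x k)) / (∏ k ∈ Finset.Iio i, (x i - x k)))
      * (1 - Matrix.of fun i j : Fin m =>
          if i < j then
            (∏ k ∈ (Finset.Iio j).erase i, (x j - x k))
              / (∏ k ∈ (Finset.Iio j).erase i, (x i - x k))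
          else 0)
      = 1 := by
  intro x
  have hx : Function.Injective x :=
    (IsFractionRing.injective (MvPolynomial (Fin m) ℚ) _).comp MvPolynomial.X_injective
  exact newtonMatrix_mul_one_sub_lagrangeMatrix hx

/-- `M_x (I - L_x) = I` over `ℚ(x_0, …, x_{m-1})`, where
`(L_x)_{ij} = ∏_{k ∈ [0,j[∖{i}}(x_j - x_k) / ∏_{k ∈ [0,j[∖{i}}(x_i - x_k)` for `i < j`,
`(L_x)_{ij} = 0` otherwise, and `(M_x)_{ij} = ∏_{k<i}(x_j - x_k)/∏_{k<i}(x_i - x_k)`. -/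
theorem stmt_7 (m : ℕ) (hm : 1 ≤ m) :
    letI K := FractionRing (MvPolynomial (Fin m) ℚ)
    let x : Fin m → K := fun i => algebraMap (MvPolynomial (Fin m) ℚ) K (MvPolynomial.X i)
    (Matrix.of fun i j : Fin m =>
        (∏ k ∈ Finset.Iio i, (x j - x k)) / (∏ k ∈ Finset.Iio i, (x i - x k)))
      * (1 - Matrix.of fun i j : Fin m =>
          if i < j then
            (∏ k ∈ (Finset.Iio j).erase i, (x j - x k))
              / (∏ k ∈ (Finset.Iio j).erase i, (x i - x k))
          else 0)
      = 1 :=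
  stmt_7_general m
end

section
/- For all integers $i, k \geq 0$: $q^{ik} = \sum_{j \geq 0} \binom{i}{j}_q \binom{k}{j}_q \, q^{\binom{j}{2}} [j]! \,(q-1)^j$ in $\mathbb{Q}(q)$. Equivalently, the $q$-power matrix $V_q = (q^{ij})$ factors as $V_q = G_q D_q G_q^{\top}$ where $G_q$ is the $q$-Pascal matrix and $D_q$ is diagonal with entries $[i]!(q-1)^i q^{\binom{i}{2}}$. -/
/-! The heart of the identity is the `q`-analogue of Newton's expansion of `x ^ k` in the falling
products `(x - 1)(x - q) ⋯ (x - q^(j-1))`: multiplying by `x` shifts them via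
`x · P_j = P_(j+1) + q^j P_j`, which matches `q`-Pascal's rule. At `x = q^i` the falling product
equals `[i choose j] q^(j choose 2) [j]! (q-1)^j`, which vanishes for `j > i`. -/

/-- The indeterminate `q` of `ℚ(q)`. -/
noncomputable def qq : RatFunc ℚ := RatFunc.X

/-- The `q`-integer `[i] = (q^i - 1)/(q - 1)`. -/
noncomputable def qint (i : ℕ) : RatFunc ℚ := (qq ^ i - 1) / (qq - 1)

/-- The `q`-factorial `[i]! = ∏_{k=1}^i [k]`. -/
noncomputable def qfac (i : ℕ) : RatFunc ℚ := ∏ k ∈ Finset.Icc 1 i, qint k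

/-- The Gaussian binomial coefficient `[i choose j] = [i]!/([j]![i-j]!)` for `0 ≤ j ≤ i`,
zero for `j ∉ [0,i]`. -/
noncomputable def qbinom (i : ℕ) (j : ℤ) : RatFunc ℚ :=
  if 0 ≤ j ∧ j ≤ (i : ℤ) then qfac i / (qfac j.toNat * qfac (i - j.toNat)) else 0

lemma qq_pow_sub_one_ne_zero {n : ℕ} (hn : n ≠ 0) : qq ^ n - 1 ≠ 0 := by
  have h : qq ^ n - 1
      = algebraMap (Polynomial ℚ) (RatFunc ℚ) (Polynomial.X ^ n - Polynomial.C 1) := by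
    simp [qq, RatFunc.algebraMap_X]
  rw [h, ne_eq, map_eq_zero_iff _ (RatFunc.algebraMap_injective ℚ)]
  exact Polynomial.X_pow_sub_C_ne_zero (Nat.pos_of_ne_zero hn) 1

lemma qq_sub_one_ne_zero : qq - 1 ≠ 0 := by
  simpa using qq_pow_sub_one_ne_zero one_ne_zero

lemma qint_zero : qint 0 = 0 := by simp [qint]

lemma qint_ne_zero {n : ℕ} (hn : n ≠ 0) : qint n ≠ 0 :=
  div_ne_zero (qq_pow_sub_one_ne_zero hn) qq_sub_one_ne_zero

lemma qq_sub_one_mul_qint (n : ℕ) : (qq - 1) * qint n = qq ^ n - 1 :=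
  mul_div_cancel₀ _ qq_sub_one_ne_zero

lemma qq_pow_sub_qq_pow {i j : ℕ} (h : j ≤ i) :
    qq ^ i - qq ^ j = qq ^ j * ((qq - 1) * qint (i - j)) := by
  rw [qq_sub_one_mul_qint, mul_sub, ← pow_add, Nat.add_sub_cancel' h, mul_one]

lemma qfac_zero : qfac 0 = 1 := by simp [qfac]

lemma qfac_succ (n : ℕ) : qfac (n + 1) = qfac n * qint (n + 1) := by
  rw [qfac, qfac, Finset.prod_Icc_succ_top (Nat.le_add_left 1 n)]

lemma qfac_ne_zero (n : ℕ) : qfac n ≠ 0 :=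
  Finset.prod_ne_zero_iff.mpr fun _ hk =>
    qint_ne_zero (Nat.one_le_iff_ne_zero.mp (Finset.mem_Icc.mp hk).1)

lemma qbinom_of_le {i j : ℕ} (h : j ≤ i) : qbinom i j = qfac i / (qfac j * qfac (i - j)) := by
  rw [qbinom, if_pos ⟨Int.natCast_nonneg j, Int.ofNat_le.mpr h⟩, Int.toNat_natCast]

lemma qbinom_of_lt {i j : ℕ} (h : i < j) : qbinom i j = 0 := by
  rw [qbinom, if_neg (by omega)]

@[simp]
lemma qbinom_zero_right (i : ℕ) : qbinom i 0 = 1 := by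
  simpa [qfac_zero, qfac_ne_zero] using qbinom_of_le (Nat.zero_le i)

lemma qbinom_self (i : ℕ) : qbinom i i = 1 := by
  simp [qbinom_of_le le_rfl, qfac_zero, qfac_ne_zero]

lemma qbinom_succ_mul_qint (i j : ℕ) :
    qbinom i (j + 1 : ℕ) * qint (j + 1) = qbinom i j * qint (i - j) := by
  rcases lt_trichotomy j i with h | rfl | h
  · obtain ⟨r, rfl⟩ := Nat.exists_eq_add_of_lt h
    rw [qbinom_of_le h, qbinom_of_le h.le, show j + r + 1 - (j + 1) = r by omega,
      show j + r + 1 - j = r + 1 by omega, qfac_succ j, qfac_succ r]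
    have := qfac_ne_zero r
    have := qint_ne_zero j.succ_ne_zero
    have := qint_ne_zero r.succ_ne_zero
    field_simp
  · rw [qbinom_of_lt j.lt_succ_self, Nat.sub_self, qint_zero, zero_mul, mul_zero]
  · rw [qbinom_of_lt h, qbinom_of_lt (h.trans j.lt_succ_self), zero_mul, zero_mul]

lemma qbinom_succ_succ (k j : ℕ) :
    qbinom (k + 1) (j + 1 : ℕ) = qq ^ (j + 1) * qbinom k (j + 1 : ℕ) + qbinom k j := by
  rcases lt_trichotomy j k with h | rfl | h
  · obtain ⟨r, rfl⟩ := Nat.exists_eq_add_of_lt h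
    rw [qbinom_of_le (by omega : j + 1 ≤ j + r + 1 + 1), qbinom_of_le h, qbinom_of_le h.le,
      show j + r + 1 + 1 - (j + 1) = r + 1 by omega, show j + r + 1 - (j + 1) = r by omega,
      show j + r + 1 - j = r + 1 by omega, qfac_succ (j + r + 1), qfac_succ j, qfac_succ r]
    have hsplit : qq ^ (j + r + 1 + 1) - 1
        = qq ^ (j + 1) * (qq ^ (r + 1) - 1) + (qq ^ (j + 1) - 1) := by ring
    have := qfac_ne_zero r
    have := qfac_ne_zero j
    have := qfac_ne_zero (j + r + 1)
    have := qq_pow_sub_one_ne_zero j.succ_ne_zero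
    have := qq_pow_sub_one_ne_zero r.succ_ne_zero
    simp only [qint]
    rw [hsplit]
    field_simp
  · rw [qbinom_self, qbinom_self, qbinom_of_lt j.lt_succ_self, mul_zero, zero_add]
  · rw [qbinom_of_lt (Nat.succ_lt_succ h), qbinom_of_lt (h.trans j.lt_succ_self), qbinom_of_lt h,
      mul_zero, add_zero]

noncomputable def qDescPochhammer (x : RatFunc ℚ) (j : ℕ) : RatFunc ℚ :=
  ∏ l ∈ Finset.range j, (x - qq ^ l)

@[simp]
lemma qDescPochhammer_zero (x : RatFunc ℚ) : qDescPochhammer x 0 = 1 := by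
  simp [qDescPochhammer]

lemma qDescPochhammer_succ (x : RatFunc ℚ) (j : ℕ) :
    qDescPochhammer x (j + 1) = qDescPochhammer x j * (x - qq ^ j) :=
  Finset.prod_range_succ _ _

lemma mul_qDescPochhammer (x : RatFunc ℚ) (j : ℕ) :
    x * qDescPochhammer x j = qDescPochhammer x (j + 1) + qq ^ j * qDescPochhammer x j := by
  rw [qDescPochhammer_succ]; ring

theorem pow_eq_sum_qbinom_mul_qDescPochhammer (x : RatFunc ℚ) (k : ℕ) :
    x ^ k = ∑ j ∈ Finset.range (k + 1), qbinom k j * qDescPochhammer x j := by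
  induction k with
  | zero => simp
  | succ k ih =>
    have hshift : ∑ j ∈ Finset.range (k + 1), qbinom k j * (qq ^ j * qDescPochhammer x j)
        = 1 + ∑ j ∈ Finset.range (k + 1),
            qq ^ (j + 1) * (qbinom k (j + 1 : ℕ) * qDescPochhammer x (j + 1)) := by
      rw [Finset.sum_range_succ', Finset.sum_range_succ
        (fun j => qq ^ (j + 1) * (qbinom k (j + 1 : ℕ) * qDescPochhammer x (j + 1))),
        qbinom_of_lt k.lt_succ_self]
      simp [add_comm, mul_left_comm]
    calc x ^ (k + 1)
        = ∑ j ∈ Finset.range (k + 1), qbinom k j * (x * qDescPochhammer x j) := by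
          rw [pow_succ', ih, Finset.mul_sum]; simp only [mul_left_comm]
      _ = ∑ j ∈ Finset.range (k + 1), qbinom k j * qDescPochhammer x (j + 1)
            + ∑ j ∈ Finset.range (k + 1), qbinom k j * (qq ^ j * qDescPochhammer x j) := by
          simp only [mul_qDescPochhammer, mul_add, Finset.sum_add_distrib]
      _ = ∑ j ∈ Finset.range (k + 1 + 1), qbinom (k + 1) j * qDescPochhammer x j := by
          rw [hshift, Finset.sum_range_succ' _ (k + 1)]
          simp only [qbinom_succ_succ, add_mul, mul_assoc, Finset.sum_add_distrib, Nat.cast_zero,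
            qbinom_zero_right, qDescPochhammer_zero, mul_one]
          ring

lemma qDescPochhammer_qq_pow (i j : ℕ) :
    qDescPochhammer (qq ^ i) j = qbinom i j * qq ^ j.choose 2 * qfac j * (qq - 1) ^ j := by
  induction j with
  | zero => simp [qfac_zero]
  | succ j ih =>
    rw [qDescPochhammer_succ, ih, qfac_succ, Nat.choose_succ_succ', Nat.choose_one_right]
    rcases le_or_gt j i with h | h
    · rw [qq_pow_sub_qq_pow h]
      linear_combination (qq ^ (j.choose 2 + j) * qfac j * (qq - 1) ^ (j + 1))
        * (qbinom_succ_mul_qint i j).symm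
    · rw [qbinom_of_lt h, qbinom_of_lt (h.trans j.lt_succ_self)]
      ring

theorem qq_pow_mul_eq_sum_range (i k : ℕ) {n : ℕ} (hk : k < n) :
    qq ^ (i * k) = ∑ j ∈ Finset.range n,
      qbinom i j * qbinom k j * qq ^ j.choose 2 * qfac j * (qq - 1) ^ j := by
  rw [pow_mul, pow_eq_sum_qbinom_mul_qDescPochhammer]
  refine Finset.sum_subset (Finset.range_subset_range.mpr hk) (fun j _ hj => ?_) |>.trans ?_
  · rw [qbinom_of_lt (by simpa using hj), zero_mul]
  · refine Finset.sum_congr rfl fun j _ => ?_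
    rw [qDescPochhammer_qq_pow]
    ring

theorem stmt_11_general (i k : ℕ) (m : ℕ) :
    qq ^ (i * k)
      = (∑ᶠ j : ℕ, qbinom i (j : ℤ) * qbinom k (j : ℤ) * qq ^ (j.choose 2) * qfac j
          * (qq - 1) ^ j)
    ∧ (Matrix.of fun a b : Fin m => qq ^ ((a : ℕ) * (b : ℕ)))
        = (Matrix.of fun a b : Fin m => qbinom a (b : ℤ))
          * Matrix.diagonal (fun a : Fin m => qfac a * (qq - 1) ^ (a : ℕ) * qq ^ ((a : ℕ).choose 2))
          * Matrix.transpose (Matrix.of fun a b : Fin m => qbinom a (b : ℤ)) := by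
  refine ⟨?_, ?_⟩
  · rw [finsum_eq_sum_of_support_subset _ (s := Finset.range (k + 1)) fun j hj => ?_]
    · exact qq_pow_mul_eq_sum_range i k k.lt_succ_self
    · by_contra hjk
      exact hj (by simp [qbinom_of_lt (show k < j by simpa using hjk)])
  · ext a b
    rw [Matrix.of_apply, qq_pow_mul_eq_sum_range a b b.isLt, Matrix.mul_apply,
      ← Fin.sum_univ_eq_sum_range]
    refine Finset.sum_congr rfl fun c _ => ?_
    simp only [Matrix.mul_diagonal, Matrix.transpose_apply, Matrix.of_apply]
    ring

/-- `q^{ik} = ∑_{j ≥ 0} [i choose j][k choose j] q^{binom(j,2)} [j]! (q-1)^j`; equivalently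
`V_q = G_q D_q G_qᵀ`, with `(V_q)_{ab} = q^{ab}`, `G_q` the `q`-Pascal matrix and `D_q`
diagonal with entries `[a]!(q-1)^a q^{binom(a,2)}`. -/
theorem stmt_11 (i k : ℕ) (m : ℕ) (hm : 1 ≤ m) :
    qq ^ (i * k)
      = (∑ᶠ j : ℕ, qbinom i (j : ℤ) * qbinom k (j : ℤ) * qq ^ (j.choose 2) * qfac j
          * (qq - 1) ^ j)
    ∧ (Matrix.of fun a b : Fin m => qq ^ ((a : ℕ) * (b : ℕ)))
        = (Matrix.of fun a b : Fin m => qbinom a (b : ℤ))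
          * Matrix.diagonal (fun a : Fin m => qfac a * (qq - 1) ^ (a : ℕ) * qq ^ ((a : ℕ).choose 2))
          * Matrix.transpose (Matrix.of fun a b : Fin m => qbinom a (b : ℤ)) :=
  stmt_11_general i k m
end

section
/- Let $m \geq 1$ and $\zeta$ a primitive $m$-th root of unity. In $\mathbb{Q}(\zeta)$, the diagonalization $G_{\zeta^{-1}}^\top V_\zeta G_{\zeta^{-1}} = m(D_{\zeta^{-1}})^{-1}$ holds, where the right side is the diagonal matrix whose $(i+1)$-st diagonal entry, for $i \in [0,m-1]$, equals $m\,\zeta^{i^2} / \prod_{j=1}^{i}(1 - \zeta^j)$. In particular each such quotient is an algebraic integer in $\mathbb{Z}[\zeta]$. -/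
/-!
Write `q = ζ⁻¹` and `T_b(x) = ∑_{j<m} [j choose b]_q x^j`, so that the `(y, b)` entry of
`V_ζ G_q` is `T_b(ζ^y)`. The `q`-Pascal rule gives the polynomial identity
`q^b (1 - x) T_{b+1}(x) = x T_b(q x)`; its top coefficients agree because `q^m = 1`.
Starting from `T_0(ζ^i) = ∑_j ζ^{ij}`, which is `m` for `i = 0` and `0` otherwise, it follows
that `V_ζ G_q` is upper triangular with diagonal entries
`T_a(ζ^a) = m ζ^{a²} / ∏_{j ≤ a} (1 - ζ^j)`.
Since `G_qᵀ` is upper unitriangular, `G_qᵀ V_ζ G_q` is upper triangular with the same diagonal,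
and being symmetric it is diagonal. Its entries lie in `ℤ[ζ]` because those of `G_q` do.
-/

/-- The `q`-factorial `[i]! = ∏_{k=1}^i (q^k - 1)/(q - 1)` evaluated at `q : ℂ`. -/
noncomputable def qfacC (q : ℂ) (i : ℕ) : ℂ := ∏ k ∈ Finset.Icc 1 i, (q ^ k - 1) / (q - 1)

/-- The Gaussian binomial coefficient `[i choose j]` at `q : ℂ`,
zero for `j > i`. -/
noncomputable def qbinomC (q : ℂ) (i j : ℕ) : ℂ :=
  if j ≤ i then qfacC q i / (qfacC q j * qfacC q (i - j)) else 0

open Finset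
open scoped Matrix

lemma qfacC_zero (q : ℂ) : qfacC q 0 = 1 := by simp [qfacC]

lemma qfacC_succ (q : ℂ) (n : ℕ) :
    qfacC q (n + 1) = qfacC q n * ((q ^ (n + 1) - 1) / (q - 1)) :=
  prod_Icc_succ_top (by omega) _

section QAnalogue

variable {q : ℂ}

lemma qfacC_ne_zero_iff {n : ℕ} : qfacC q n ≠ 0 ↔ ∀ k ∈ Icc 1 n, q ^ k ≠ 1 := by
  simp only [qfacC, prod_ne_zero_iff, ne_eq, div_eq_zero_iff, not_or, sub_eq_zero]
  refine ⟨fun h k hk => (h k hk).1, fun h k hk => ⟨h k hk, ?_⟩⟩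
  simpa using h 1 (by simp only [mem_Icc] at hk ⊢; omega)

lemma qfacC_ne_zero_of_le {n k : ℕ} (hn : qfacC q n ≠ 0) (hk : k ≤ n) : qfacC q k ≠ 0 :=
  qfacC_ne_zero_iff.mpr fun i hi =>
    qfacC_ne_zero_iff.mp hn i (by simp only [mem_Icc] at hi ⊢; omega)

lemma pow_sub_one_ne_zero_of_qfacC_ne_zero {n k : ℕ} (hn : qfacC q n ≠ 0) (hk0 : 0 < k)
    (hkn : k ≤ n) : q ^ k - 1 ≠ 0 :=
  sub_ne_zero.mpr (qfacC_ne_zero_iff.mp hn k (mem_Icc.mpr ⟨hk0, hkn⟩))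

lemma sub_one_ne_zero_of_qfacC_ne_zero {n : ℕ} (hn : qfacC q n ≠ 0) (hn0 : n ≠ 0) :
    q - 1 ≠ 0 := by
  simpa using pow_sub_one_ne_zero_of_qfacC_ne_zero hn (k := 1) (by omega) (by omega)

lemma IsPrimitiveRoot.qfacC_ne_zero {m n : ℕ} (hq : IsPrimitiveRoot q m) (hn : n < m) :
    qfacC q n ≠ 0 :=
  qfacC_ne_zero_iff.mpr fun k hk => by
    rw [mem_Icc] at hk
    exact hq.pow_ne_one_of_pos_of_lt (by omega) (by omega)

lemma qbinomC_of_lt {n k : ℕ} (h : n < k) : qbinomC q n k = 0 := if_neg (by omega)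

lemma qbinomC_add_left (a d : ℕ) :
    qbinomC q (a + d) a = qfacC q (a + d) / (qfacC q a * qfacC q d) := by
  rw [qbinomC, if_pos (by omega), Nat.add_sub_cancel_left]

lemma qbinomC_self {n : ℕ} (hn : qfacC q n ≠ 0) : qbinomC q n n = 1 := by
  simpa [qfacC_zero, hn] using qbinomC_add_left (q := q) n 0

lemma qbinomC_zero_right {n : ℕ} (hn : qfacC q n ≠ 0) : qbinomC q n 0 = 1 := by
  simpa [qfacC_zero, hn] using qbinomC_add_left (q := q) 0 n

lemma qbinomC_succ_succ {n : ℕ} (hn : qfacC q (n + 1) ≠ 0) (k : ℕ) :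
    qbinomC q (n + 1) (k + 1) = qbinomC q n k + q ^ (k + 1) * qbinomC q n (k + 1) := by
  rcases lt_trichotomy k n with hkn | rfl | hnk
  · obtain ⟨d, rfl⟩ : ∃ d, n = k + 1 + d := ⟨n - (k + 1), by omega⟩
    have hq1 := sub_one_ne_zero_of_qfacC_ne_zero hn (by omega)
    have hk := pow_sub_one_ne_zero_of_qfacC_ne_zero hn (k := k + 1) (by omega) (by omega)
    have hd := pow_sub_one_ne_zero_of_qfacC_ne_zero hn (k := d + 1) (by omega) (by omega)
    have hK := qfacC_ne_zero_of_le hn (k := k) (by omega)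
    have hD := qfacC_ne_zero_of_le hn (k := d) (by omega)
    rw [show k + 1 + d + 1 = (k + 1) + (d + 1) by ring, qbinomC_add_left,
      show k + 1 + d = k + (d + 1) by ring, qbinomC_add_left,
      show k + (d + 1) = (k + 1) + d by ring, qbinomC_add_left,
      show k + 1 + (d + 1) = (k + 1 + d) + 1 by ring]
    simp only [qfacC_succ]
    field_simp
    ring
  · simp [qbinomC_self hn, qbinomC_self (qfacC_ne_zero_of_le hn (Nat.le_succ k)),
      qbinomC_of_lt (Nat.lt_succ_self k)]
  · simp [qbinomC_of_lt hnk, qbinomC_of_lt (Nat.succ_lt_succ hnk),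
      qbinomC_of_lt (hnk.trans (Nat.lt_succ_self k))]

/-- The ratio `[n, k+1] / [n, k] = (q^{n-k} - 1) / (q^{k+1} - 1)`, scaled by `q^k` so that no
truncated subtraction appears in an exponent. -/
lemma qbinomC_succ_right_mul {n : ℕ} (hn : qfacC q n ≠ 0) (k : ℕ) :
    q ^ k * (q ^ (k + 1) - 1) * qbinomC q n (k + 1) = (q ^ n - q ^ k) * qbinomC q n k := by
  rcases lt_or_ge k n with hkn | hnk
  · obtain ⟨e, rfl⟩ : ∃ e, n = k + 1 + e := ⟨n - (k + 1), by omega⟩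
    have hq1 := sub_one_ne_zero_of_qfacC_ne_zero hn (by omega)
    have hk := pow_sub_one_ne_zero_of_qfacC_ne_zero hn (k := k + 1) (by omega) (by omega)
    have he := pow_sub_one_ne_zero_of_qfacC_ne_zero hn (k := e + 1) (by omega) (by omega)
    have hK := qfacC_ne_zero_of_le hn (k := k) (by omega)
    have hE := qfacC_ne_zero_of_le hn (k := e) (by omega)
    rw [qbinomC_add_left, show k + 1 + e = k + (e + 1) by ring, qbinomC_add_left]
    simp only [qfacC_succ]
    field_simp
    ring
  · rcases hnk.eq_or_lt with rfl | hnk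
    · simp [qbinomC_of_lt (Nat.lt_succ_self n)]
    · simp [qbinomC_of_lt hnk, qbinomC_of_lt (hnk.trans (Nat.lt_succ_self k))]

lemma pow_mul_qbinomC_succ_succ {n : ℕ} (hn : qfacC q (n + 1) ≠ 0) (k : ℕ) :
    q ^ k * qbinomC q (n + 1) (k + 1) = q ^ n * qbinomC q n k + q ^ k * qbinomC q n (k + 1) := by
  linear_combination q ^ k * qbinomC_succ_succ hn k +
    qbinomC_succ_right_mul (qfacC_ne_zero_of_le hn n.le_succ) k

lemma pow_mul_qbinomC_succ_right_of_pow_eq_one {n k : ℕ} (hn : qfacC q n ≠ 0)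
    (hq : q ^ (n + 1) = 1) (hk : k < n) :
    q ^ (k + 1) * qbinomC q n (k + 1) = -qbinomC q n k := by
  have hk1 := pow_sub_one_ne_zero_of_qfacC_ne_zero hn (k := k + 1) (by omega) hk
  refine mul_left_cancel₀ hk1 ?_
  linear_combination q * qbinomC_succ_right_mul hn k + qbinomC q n k * hq

lemma qbinomC_mem {S : Subring ℂ} (hq : q ∈ S) {n : ℕ} (hn : qfacC q n ≠ 0) (k : ℕ) :
    qbinomC q n k ∈ S := by
  induction n generalizing k with
  | zero =>
    cases k with
    | zero => exact qbinomC_zero_right hn ▸ S.one_mem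
    | succ k => exact qbinomC_of_lt (Nat.succ_pos k) ▸ S.zero_mem
  | succ n ih =>
    have ih := ih (qfacC_ne_zero_of_le hn n.le_succ)
    cases k with
    | zero => exact qbinomC_zero_right hn ▸ S.one_mem
    | succ k =>
      rw [qbinomC_succ_succ hn]
      exact S.add_mem (ih k) (S.mul_mem (S.pow_mem hq _) (ih (k + 1)))

end QAnalogue

noncomputable def qbinomColSum (q : ℂ) (m b : ℕ) (x : ℂ) : ℂ :=
  ∑ j ∈ range m, qbinomC q j b * x ^ j

section ColumnSums

variable {q : ℂ} {m : ℕ}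

lemma qbinomColSum_zero (hq : IsPrimitiveRoot q m) (x : ℂ) :
    qbinomColSum q m 0 x = ∑ j ∈ range m, x ^ j :=
  sum_congr rfl fun j hj => by
    rw [qbinomC_zero_right (hq.qfacC_ne_zero (mem_range.mp hj)), one_mul]

lemma qbinomColSum_succ (hq : IsPrimitiveRoot q m) {b : ℕ} (hb : b + 1 < m) (x : ℂ) :
    q ^ b * (1 - x) * qbinomColSum q m (b + 1) x = x * qbinomColSum q m b (q * x) := by
  obtain ⟨n, rfl⟩ : ∃ n, m = n + 1 := ⟨m - 1, by omega⟩
  have hbd := pow_mul_qbinomC_succ_right_of_pow_eq_one (hq.qfacC_ne_zero n.lt_succ_self)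
    hq.pow_eq_one (k := b) (by omega)
  have hshift : q ^ b * qbinomColSum q (n + 1) (b + 1) x
      = x * ∑ j ∈ range n, qbinomC q j b * (q * x) ^ j
        + q ^ b * x * ∑ j ∈ range n, qbinomC q j (b + 1) * x ^ j := by
    rw [qbinomColSum, sum_range_succ', qbinomC_of_lt (Nat.succ_pos b), zero_mul, add_zero,
      mul_sum, mul_sum, mul_sum, ← sum_add_distrib]
    refine sum_congr rfl fun j hj => ?_
    have hj : j + 1 < n + 1 := by simpa using mem_range.mp hj
    linear_combination x ^ (j + 1) * pow_mul_qbinomC_succ_succ (hq.qfacC_ne_zero hj) b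
  rw [qbinomColSum, qbinomColSum, sum_range_succ, sum_range_succ] at *
  linear_combination hshift - x ^ (n + 1) * q ^ n * hbd
    + x ^ (n + 1) * q ^ b * qbinomC q n (b + 1) * hq.pow_eq_one

end ColumnSums

section RootOfUnity

variable {ζ : ℂ} {m : ℕ}

lemma qbinomColSum_inv_pow_eq_zero (hζ : IsPrimitiveRoot ζ m) {b i : ℕ} (hbi : b < i)
    (him : i < m) : qbinomColSum ζ⁻¹ m b (ζ ^ i) = 0 := by
  induction b generalizing i with
  | zero =>
    have hζi : ζ ^ i ≠ 1 := hζ.pow_ne_one_of_pos_of_lt (by omega) him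
    rw [qbinomColSum_zero hζ.inv, geom_sum_eq hζi, ← pow_mul, mul_comm, pow_mul,
      hζ.pow_eq_one, one_pow, sub_self, zero_div]
  | succ b ih =>
    obtain ⟨i, rfl⟩ : ∃ i', i = i' + 1 := ⟨i - 1, by omega⟩
    have hrec := qbinomColSum_succ hζ.inv (b := b) (by omega) (ζ ^ (i + 1))
    rw [pow_succ' ζ i, inv_mul_cancel_left₀ (hζ.ne_zero (by omega)), ← pow_succ',
      ih (by omega) (by omega), mul_zero] at hrec
    have hζi : 1 - ζ ^ (i + 1) ≠ 0 :=
      sub_ne_zero.mpr (hζ.pow_ne_one_of_pos_of_lt (by omega) him).symm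
    simpa [hζ.ne_zero (by omega : m ≠ 0), hζi] using hrec

lemma qbinomColSum_inv_pow_self_mul_prod (hζ : IsPrimitiveRoot ζ m) {a : ℕ} (ham : a < m) :
    qbinomColSum ζ⁻¹ m a (ζ ^ a) * ∏ j ∈ Icc 1 a, (1 - ζ ^ j) = m * ζ ^ (a ^ 2) := by
  induction a with
  | zero => simp [qbinomColSum_zero hζ.inv]
  | succ a ih =>
    have hrec := qbinomColSum_succ hζ.inv (b := a) ham (ζ ^ (a + 1))
    have hζ0 : ζ ≠ 0 := hζ.ne_zero (by omega)
    rw [pow_succ' ζ a, inv_mul_cancel_left₀ hζ0, ← pow_succ'] at hrec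
    have hunit : ζ ^ a * ζ⁻¹ ^ a = 1 := by rw [← mul_pow, mul_inv_cancel₀ hζ0, one_pow]
    rw [prod_Icc_succ_top (by omega)]
    set P := ∏ j ∈ Icc 1 a, (1 - ζ ^ j)
    set T := qbinomColSum ζ⁻¹ m (a + 1) (ζ ^ (a + 1))
    linear_combination ζ ^ a * P * hrec + ζ ^ (2 * a + 1) * ih (by omega)
      - T * (1 - ζ ^ (a + 1)) * P * hunit

end RootOfUnity

namespace Matrix

lemma mul_apply_mem {l n p R : Type*} [Fintype n] [Ring R] {S : Subring R}
    {A : Matrix l n R} {B : Matrix n p R} (hA : ∀ i j, A i j ∈ S) (hB : ∀ i j, B i j ∈ S)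
    (i : l) (j : p) : (A * B) i j ∈ S :=
  S.sum_mem fun k _ => S.mul_mem (hA i k) (hB k j)

lemma IsSymm.transpose_mul_mul {n p R : Type*} [Fintype n] [CommSemiring R]
    {V : Matrix n n R} (hV : V.IsSymm) (G : Matrix n p R) : (Gᵀ * V * G).IsSymm := by
  rw [IsSymm, transpose_mul, transpose_mul, transpose_transpose, hV.eq, Matrix.mul_assoc]

variable {n R : Type*} [LinearOrder n]

lemma IsUpperTriangular.mul_apply_self [Fintype n] [NonUnitalNonAssocSemiring R]
    {A B : Matrix n n R} (hA : A.IsUpperTriangular) (hB : B.IsUpperTriangular) (i : n) :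
    (A * B) i i = A i i * B i i := by
  rw [Matrix.mul_apply]
  refine sum_eq_single i (fun k _ hki => ?_) (by simp)
  rcases hki.lt_or_gt with hki | hik
  · rw [hA hki, zero_mul]
  · rw [hB hik, mul_zero]

lemma IsSymm.isDiag_of_isUpperTriangular [Zero R] {A : Matrix n n R} (hS : A.IsSymm)
    (hU : A.IsUpperTriangular) : A.IsDiag := fun i j hij => by
  rcases hij.lt_or_gt with hij | hji
  · rw [← hS.apply]; exact hU hij
  · exact hU hji

end Matrix

lemma IsPrimitiveRoot.inv_mem_adjoin {ζ : ℂ} {m : ℕ} (hζ : IsPrimitiveRoot ζ m)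
    (hm : m ≠ 0) :
    ζ⁻¹ ∈ Algebra.adjoin ℤ ({ζ} : Set ℂ) := by
  rw [inv_eq_of_mul_eq_one_right (b := ζ ^ (m - 1))
    (by rw [← pow_succ', Nat.sub_add_cancel (by omega), hζ.pow_eq_one])]
  exact Subalgebra.pow_mem _ (Algebra.self_mem_adjoin_singleton ℤ ζ) _

section QPascalMatrix

variable {ζ : ℂ} {m : ℕ}

lemma transpose_qPascal_isUpperTriangular (q : ℂ) :
    (Matrix.of fun i j : Fin m => qbinomC q i j)ᵀ.IsUpperTriangular :=
  fun _ _ hji => qbinomC_of_lt hji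

lemma vandermonde_mul_qPascal_apply (y b : Fin m) :
    ((Matrix.of fun i j : Fin m => ζ ^ ((i : ℕ) * (j : ℕ)))
      * Matrix.of fun i j : Fin m => qbinomC ζ⁻¹ i j) y b
      = qbinomColSum ζ⁻¹ m b (ζ ^ (y : ℕ)) := by
  rw [qbinomColSum, ← Fin.sum_univ_eq_sum_range]
  simp only [Matrix.mul_apply, Matrix.of_apply, pow_mul]
  exact sum_congr rfl fun j _ => mul_comm _ _

lemma vandermonde_mul_qPascal_isUpperTriangular (hζ : IsPrimitiveRoot ζ m) :
    ((Matrix.of fun i j : Fin m => ζ ^ ((i : ℕ) * (j : ℕ)))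
      * Matrix.of fun i j : Fin m => qbinomC ζ⁻¹ i j).IsUpperTriangular := fun y b hby => by
  rw [vandermonde_mul_qPascal_apply]
  exact qbinomColSum_inv_pow_eq_zero hζ hby y.isLt

lemma vandermonde_mul_qPascal_apply_self (hζ : IsPrimitiveRoot ζ m) (a : Fin m) :
    ((Matrix.of fun i j : Fin m => ζ ^ ((i : ℕ) * (j : ℕ)))
      * Matrix.of fun i j : Fin m => qbinomC ζ⁻¹ i j) a a
      = m * ζ ^ ((a : ℕ) ^ 2) / ∏ j ∈ Icc 1 (a : ℕ), (1 - ζ ^ j) := by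
  have hprod : ∏ j ∈ Icc 1 (a : ℕ), (1 - ζ ^ j) ≠ 0 := prod_ne_zero_iff.mpr fun j hj => by
    rw [mem_Icc] at hj
    exact sub_ne_zero.mpr (hζ.pow_ne_one_of_pos_of_lt (by omega) (by omega)).symm
  rw [vandermonde_mul_qPascal_apply, eq_div_iff hprod,
    qbinomColSum_inv_pow_self_mul_prod hζ a.isLt]

end QPascalMatrix

theorem stmt_14_general (m : ℕ) (ζ : ℂ) (hζ : IsPrimitiveRoot ζ m) :
    Matrix.transpose (Matrix.of fun i j : Fin m => qbinomC ζ⁻¹ i j)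
        * (Matrix.of fun i j : Fin m => ζ ^ ((i : ℕ) * (j : ℕ)))
        * (Matrix.of fun i j : Fin m => qbinomC ζ⁻¹ i j)
      = Matrix.diagonal (fun i : Fin m =>
          (m : ℂ) * ζ ^ ((i : ℕ) ^ 2) / ∏ j ∈ Finset.Icc 1 (i : ℕ), (1 - ζ ^ j))
    ∧ ∀ i : Fin m,
        (m : ℂ) * ζ ^ ((i : ℕ) ^ 2) / ∏ j ∈ Finset.Icc 1 (i : ℕ), (1 - ζ ^ j)
          ∈ Algebra.adjoin ℤ ({ζ} : Set ℂ) := by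
  set G : Matrix (Fin m) (Fin m) ℂ := Matrix.of fun i j => qbinomC ζ⁻¹ i j
  set V : Matrix (Fin m) (Fin m) ℂ := Matrix.of fun i j => ζ ^ ((i : ℕ) * (j : ℕ))
  have hGt : Gᵀ.IsUpperTriangular := transpose_qPascal_isUpperTriangular ζ⁻¹
  have hVG : (V * G).IsUpperTriangular := vandermonde_mul_qPascal_isUpperTriangular hζ
  have hsymm : (Gᵀ * V * G).IsSymm :=
    Matrix.IsSymm.transpose_mul_mul (Matrix.IsSymm.ext fun i j => by simp [V, mul_comm]) G
  have hdiag (i : Fin m) : (Gᵀ * V * G) i i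
      = m * ζ ^ ((i : ℕ) ^ 2) / ∏ j ∈ Icc 1 (i : ℕ), (1 - ζ ^ j) := by
    rw [Matrix.mul_assoc, hGt.mul_apply_self hVG, Matrix.transpose_apply,
      show G i i = 1 from qbinomC_self (hζ.inv.qfacC_ne_zero i.isLt), one_mul,
      vandermonde_mul_qPascal_apply_self hζ]
  refine ⟨?_, fun i => hdiag i ▸ ?_⟩
  · have hU : (Gᵀ * V * G).IsUpperTriangular := Matrix.mul_assoc Gᵀ V G ▸ hGt.mul hVG
    rw [← (hsymm.isDiag_of_isUpperTriangular hU).diagonal_diag]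
    exact congrArg _ (funext hdiag)
  · set S := (Algebra.adjoin ℤ ({ζ} : Set ℂ)).toSubring
    have hG (i j : Fin m) : G i j ∈ S :=
      qbinomC_mem (hζ.inv_mem_adjoin i.pos.ne') (hζ.inv.qfacC_ne_zero i.isLt) j
    have hV (i j : Fin m) : V i j ∈ S := S.pow_mem (Algebra.self_mem_adjoin_singleton ℤ ζ) _
    exact Matrix.mul_apply_mem (Matrix.mul_apply_mem (fun i j => hG j i) hV) hG i i

/-- For a primitive `m`-th root of unity `ζ`, the diagonalization
`G_{ζ⁻¹}ᵀ V_ζ G_{ζ⁻¹} = m (D_{ζ⁻¹})⁻¹` holds, where the right hand side is the diagonal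
matrix with `(i+1)`-st entry `m ζ^{i²} / ∏_{j=1}^{i} (1 - ζ^j)`; moreover each such
entry lies in `ℤ[ζ]`. -/
theorem stmt_14 (m : ℕ) (hm : 1 ≤ m) (ζ : ℂ) (hζ : IsPrimitiveRoot ζ m) :
    Matrix.transpose (Matrix.of fun i j : Fin m => qbinomC ζ⁻¹ i j)
        * (Matrix.of fun i j : Fin m => ζ ^ ((i : ℕ) * (j : ℕ)))
        * (Matrix.of fun i j : Fin m => qbinomC ζ⁻¹ i j)
      = Matrix.diagonal (fun i : Fin m =>
          (m : ℂ) * ζ ^ ((i : ℕ) ^ 2) / ∏ j ∈ Finset.Icc 1 (i : ℕ), (1 - ζ ^ j))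
    ∧ ∀ i : Fin m,
        (m : ℂ) * ζ ^ ((i : ℕ) ^ 2) / ∏ j ∈ Finset.Icc 1 (i : ℕ), (1 - ζ ^ j)
          ∈ Algebra.adjoin ℤ ({ζ} : Set ℂ) :=
  stmt_14_general m ζ hζ
end

section
/- For $k \geq 1$ and a prime $p$, setting $f_k(X) := -\sum_{i=0}^{p-2}(p-1-i)X^{ip^{k-1}}$ and $g_k(X) := \sum_{i=0}^{p^{n-k}-1}\big(-(p^{n-k+1} - p(i+1))X^{ip^k + p^{k-1}} + (p^{n-k+1} - p(i+1) + 1)X^{ip^k}\big)$, one has in $\mathbb{Z}[X]$: $f_k(X) \cdot \prod_{i \in [0,n] \setminus \{k\}} \Phi_{p^i}(X) + g_k(X) \cdot \Phi_{p^k}(X) = p^{n-k+1}$, where $\Phi_{p^i}$ is the $p^i$-th cyclotomic polynomial and $n \geq k$. -/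
/-!
Put `y = X ^ p ^ (k - 1)` and `m = p ^ (n - k)`. Then `Φ_{p^k} = G := ∑_{i<p} y^i`, the product of
the other cyclotomic factors is `(y - 1) T` with `T = ∑_{i<m} y^{pi}`, `f_k = -A` with
`A = ∑_{i<p} (p-1-i) y^i`, and `g_k = T - p (y - 1) B` with `B = ∑_{i<m} (m-1-i) y^{pi}`.
The weighted geometric sums telescope: `A (y - 1) = G - p` and `B (y^p - 1) = T - m`, so the left
side is `-(G - p) T + T G - p (T - m) = p m`.
-/

open Polynomial Finset

theorem sum_range_rev_mul_pow_mul_sub_one {R : Type*} [CommRing R] (q : ℕ) (z : R) :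
    (∑ i ∈ range q, ((q : R) - 1 - i) * z ^ i) * (z - 1) = ∑ i ∈ range q, z ^ i - q := by
  induction q with
  | zero => simp
  | succ q ih =>
    have hsplit : ∑ i ∈ range (q + 1), (((q + 1 : ℕ) : R) - 1 - i) * z ^ i
        = ∑ i ∈ range q, ((q : R) - 1 - i) * z ^ i + ∑ i ∈ range q, z ^ i := by
      rw [sum_range_succ, ← sum_add_distrib]
      push_cast
      simp only [add_sub_cancel_right, sub_self, zero_mul, add_zero]
      exact sum_congr rfl fun i _ => by ring
    rw [hsplit, add_mul, ih, geom_sum_mul, sum_range_succ]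
    push_cast
    ring

theorem prod_range_cyclotomic_prime_pow {p : ℕ} (hp : p.Prime) (n : ℕ) (R : Type*) [CommRing R] :
    ∏ i ∈ range (n + 1), cyclotomic (p ^ i) R = X ^ p ^ n - 1 := by
  rw [← Nat.prod_divisors_prime_pow (f := fun d => cyclotomic d R) hp,
    prod_cyclotomic_eq_X_pow_sub_one (pow_pos hp.pos n)]

theorem prod_erase_cyclotomic_prime_pow {p : ℕ} (hp : p.Prime) {k n : ℕ} (hkn : k < n)
    (R : Type*) [CommRing R] :
    ∏ i ∈ (range (n + 1)).erase (k + 1), cyclotomic (p ^ i) R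
      = (X ^ p ^ k - 1) * ∑ i ∈ range (p ^ (n - (k + 1))), (X ^ p ^ (k + 1)) ^ i := by
  refine (cyclotomic.monic (p ^ (k + 1)) R).isRegular.right ?_
  have hn : p ^ (k + 1) * p ^ (n - (k + 1)) = p ^ n := by rw [← pow_add]; congr 1; omega
  dsimp only
  rw [prod_erase_mul _ _ (mem_range.2 (by omega)), prod_range_cyclotomic_prime_pow hp,
    cyclotomic_prime_pow_eq_geom_sum hp, mul_right_comm, mul_geom_sum, ← pow_mul, ← pow_succ,
    mul_comm, geom_sum_mul, ← pow_mul, hn]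

/-- For a prime `p` and `1 ≤ k ≤ n`, with
`f_k(X) = -∑_{i=0}^{p-2}(p-1-i) X^{i p^{k-1}}` and
`g_k(X) = ∑_{i=0}^{p^{n-k}-1} (-(p^{n-k+1} - p(i+1)) X^{i p^k + p^{k-1}}
  + (p^{n-k+1} - p(i+1) + 1) X^{i p^k})`, one has in `ℤ[X]`:
`f_k · ∏_{i ∈ [0,n]∖{k}} Φ_{p^i} + g_k · Φ_{p^k} = p^{n-k+1}`. -/
theorem stmt_17 (p n k : ℕ) (hp : p.Prime) (hk : 1 ≤ k) (hkn : k ≤ n) :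
    (-(∑ i ∈ Finset.range (p - 1),
          Polynomial.C ((p : ℤ) - 1 - (i : ℤ)) * Polynomial.X ^ (i * p ^ (k - 1))))
        * (∏ i ∈ (Finset.range (n + 1)).erase k, Polynomial.cyclotomic (p ^ i) ℤ)
      + (∑ i ∈ Finset.range (p ^ (n - k)),
          (-(Polynomial.C ((p : ℤ) ^ (n - k + 1) - (p : ℤ) * ((i : ℤ) + 1)))
              * Polynomial.X ^ (i * p ^ k + p ^ (k - 1))
            + Polynomial.C ((p : ℤ) ^ (n - k + 1) - (p : ℤ) * ((i : ℤ) + 1) + 1)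
              * Polynomial.X ^ (i * p ^ k)))
          * Polynomial.cyclotomic (p ^ k) ℤ
      = Polynomial.C ((p : ℤ) ^ (n - k + 1)) := by
  obtain ⟨j, rfl⟩ : ∃ j, k = j + 1 := ⟨k - 1, by omega⟩
  rw [Nat.add_sub_cancel, prod_erase_cyclotomic_prime_pow hp hkn ℤ,
    cyclotomic_prime_pow_eq_geom_sum hp]
  set y : ℤ[X] := X ^ p ^ j with hy
  set m := p ^ (n - (j + 1))
  have hw : (X : ℤ[X]) ^ p ^ (j + 1) = y ^ p := by rw [pow_succ, pow_mul]
  have hpm : (p : ℤ) ^ (n - (j + 1) + 1) = p * m := by push_cast [m]; ring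
  set T := ∑ i ∈ range m, (y ^ p) ^ i
  set B := ∑ i ∈ range m, ((m : ℤ[X]) - 1 - i) * (y ^ p) ^ i
  have hf : ∑ i ∈ range (p - 1), C ((p : ℤ) - 1 - i) * X ^ (i * p ^ j)
      = ∑ i ∈ range p, ((p : ℤ[X]) - 1 - i) * y ^ i := by
    obtain ⟨p', rfl⟩ : ∃ p', p = p' + 1 := ⟨p - 1, by have := hp.pos; omega⟩
    rw [sum_range_succ, Nat.add_sub_cancel]
    simp only [Nat.cast_add, Nat.cast_one, add_sub_cancel_right, sub_self, zero_mul, add_zero,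
      map_sub, map_natCast, pow_mul', ← hy]
  have hg : ∑ i ∈ range m, (-C ((p : ℤ) ^ (n - (j + 1) + 1) - p * (i + 1))
        * X ^ (i * p ^ (j + 1) + p ^ j) + C ((p : ℤ) ^ (n - (j + 1) + 1) - p * (i + 1) + 1)
        * X ^ (i * p ^ (j + 1))) = T - p * (y - 1) * B := by
    rw [mul_sum, ← sum_sub_distrib]
    refine sum_congr rfl fun i _ => ?_
    rw [hpm, pow_add, pow_mul', hw, ← hy]
    simp only [map_sub, map_add, map_mul, map_natCast, map_one]
    ring
  have hA := sum_range_rev_mul_pow_mul_sub_one p y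
  have hB : B * (y ^ p - 1) = T - m := sum_range_rev_mul_pow_mul_sub_one m (y ^ p)
  have hG := geom_sum_mul y p
  rw [hf, hg, hpm, hw, map_mul, map_natCast, map_natCast]
  linear_combination -T * hA - p * B * hG - p * hB
end
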